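/- arXiv:2204.13647 — 3 statements merged into one kernel-verified Lean document; each statement's English description precedes it below -/
import Mathlib

section
/- Let k be a field of characteristic p > 0 and v ∈ k[h]. Then the element hᵖ − h is central in the generalized Weyl algebra A(v), i.e. it commutes with x, y, and h. -/
open Polynomial

/-- The defining relations of the generalized Weyl algebra `A(v)`:
generators `x = ι 0`, `y = ι 1`, `h = ι 2`, relations
`[h,x] = x`, `[h,y] = -y`, `x*y = v(h)`, `y*x = v(h-1)`. -/
inductive GWARel (k : Type*) [Field k] (v : Polynomial k) :
    FreeAlgebra k (Fin 3) → FreeAlgebra k (Fin 3) → Prop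
  | hx : GWARel k v
      (FreeAlgebra.ι k (2 : Fin 3) * FreeAlgebra.ι k (0 : Fin 3) -
        FreeAlgebra.ι k (0 : Fin 3) * FreeAlgebra.ι k (2 : Fin 3))
      (FreeAlgebra.ι k (0 : Fin 3))
  | hy : GWARel k v
      (FreeAlgebra.ι k (2 : Fin 3) * FreeAlgebra.ι k (1 : Fin 3) -
        FreeAlgebra.ι k (1 : Fin 3) * FreeAlgebra.ι k (2 : Fin 3))
      (-(FreeAlgebra.ι k (1 : Fin 3)))
  | xy : GWARel k v
      (FreeAlgebra.ι k (0 : Fin 3) * FreeAlgebra.ι k (1 : Fin 3))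
      (Polynomial.aeval (FreeAlgebra.ι k (2 : Fin 3)) v)
  | yx : GWARel k v
      (FreeAlgebra.ι k (1 : Fin 3) * FreeAlgebra.ι k (0 : Fin 3))
      (Polynomial.aeval (FreeAlgebra.ι k (2 : Fin 3) - 1) v)

/-- The generalized Weyl algebra `A(v)`. -/
abbrev GWA (k : Type*) [Field k] (v : Polynomial k) := RingQuot (GWARel k v)

variable (k : Type*) [Field k] (v : Polynomial k)

/-- The generator `x` of `A(v)`. -/
noncomputable def GWA.x : GWA k v :=
  RingQuot.mkAlgHom k (GWARel k v) (FreeAlgebra.ι k (0 : Fin 3))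

/-- The generator `y` of `A(v)`. -/
noncomputable def GWA.y : GWA k v :=
  RingQuot.mkAlgHom k (GWARel k v) (FreeAlgebra.ι k (1 : Fin 3))

/-- The generator `h` of `A(v)`. -/
noncomputable def GWA.h : GWA k v :=
  RingQuot.mkAlgHom k (GWARel k v) (FreeAlgebra.ι k (2 : Fin 3))

/-!
Proof idea: the relations say `x (h + 1) = h x` and `y (h - 1) = h y`, so conjugating by `x` or
`y` shifts `h` by `±1`, and hence shifts `h ^ p - h` to `(h ± 1) ^ p - (h ± 1)`. In characteristic
`p` the Artin–Schreier map `a ↦ a ^ p - a` is invariant under `a ↦ a + 1`, since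
`(a + 1) ^ p = a ^ p + 1`.
-/

theorem natCast_char_eq_zero_of_algebra (k : Type*) {A : Type*} [CommSemiring k] [Semiring A]
    [Algebra k A] (p : ℕ) [CharP k p] : (p : A) = 0 := by
  rw [← map_natCast (algebraMap k A), CharP.cast_eq_zero, map_zero]

theorem Commute.add_pow_char_of_algebra (k : Type*) {A : Type*} [CommSemiring k] [Semiring A]
    [Algebra k A] (p : ℕ) [Fact p.Prime] [CharP k p] {a b : A} (hab : Commute a b) :
    (a + b) ^ p = a ^ p + b ^ p := by
  obtain ⟨r, hr⟩ := hab.exists_add_pow_prime_eq (Fact.out : p.Prime)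
  rw [hr, natCast_char_eq_zero_of_algebra k p, zero_mul, zero_mul, zero_mul, add_zero]

theorem add_one_pow_char_sub_add_one_of_algebra (k : Type*) {A : Type*} [CommSemiring k] [Ring A]
    [Algebra k A] (p : ℕ) [Fact p.Prime] [CharP k p] (a : A) :
    (a + 1) ^ p - (a + 1) = a ^ p - a := by
  rw [(Commute.one_right a).add_pow_char_of_algebra k p, one_pow, add_sub_add_right_eq_sub]

namespace GWA

variable {k : Type*} [Field k] {v : Polynomial k}

theorem x_mul_h_add_one : x k v * (h k v + 1) = h k v * x k v := by
  have hrel := RingQuot.mkAlgHom_rel k (GWARel.hx (k := k) (v := v))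
  simp only [map_sub, map_mul, sub_eq_iff_eq_add'] at hrel
  rw [h, x, mul_add_one, hrel]

theorem y_mul_h_sub_one : y k v * (h k v - 1) = h k v * y k v := by
  have hrel := RingQuot.mkAlgHom_rel k (GWARel.hy (k := k) (v := v))
  simp only [map_sub, map_mul, map_neg, sub_eq_iff_eq_add'] at hrel
  rw [h, y, mul_sub_one, hrel, sub_eq_add_neg]

end GWA

/-- If `char k = p > 0`, then `h^p - h` commutes with `x`, `y` and `h` in `A(v)`. -/
theorem gwa_hp_sub_h_central (p : ℕ) [hp : Fact p.Prime] [CharP k p] :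
    Commute (GWA.h k v ^ p - GWA.h k v) (GWA.x k v) ∧
    Commute (GWA.h k v ^ p - GWA.h k v) (GWA.y k v) ∧
    Commute (GWA.h k v ^ p - GWA.h k v) (GWA.h k v) := by
  have shift_x : SemiconjBy (GWA.x k v) (GWA.h k v + 1) (GWA.h k v) := GWA.x_mul_h_add_one
  have shift_y : SemiconjBy (GWA.y k v) (GWA.h k v - 1) (GWA.h k v) := GWA.y_mul_h_sub_one
  refine ⟨?_, ?_, ((Commute.refl _).pow_left p).sub_left (Commute.refl _)⟩
  · have hx := (shift_x.pow_right p).sub_right shift_x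
    rw [add_one_pow_char_sub_add_one_of_algebra k] at hx
    exact Commute.symm hx
  · have hy := (shift_y.pow_right p).sub_right shift_y
    rw [← add_one_pow_char_sub_add_one_of_algebra k p (GWA.h k v - 1), sub_add_cancel] at hy
    exact Commute.symm hy
end

section
/- Let k be a field of characteristic p > 0, c₁,…,c_n ∈ k, and v(h) = ∏_{i=1}^n (h−c_i). Then in the generalized Weyl algebra A(v) one has xᵖ·yᵖ = ∏_{i=1}^n ((hᵖ−h) − (c_iᵖ − c_i)). -/
open Polynomial

variable (k : Type*) [Field k] (v : Polynomial k)

/-! Moving `y` to the left past a polynomial in `h` shifts `h` by `1`, so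
`x^m y^m = ∏_{j<m} v(h - j)`; as `A(v)` is not commutative, this product is formed in `k[X]`
and evaluated at `h`. In characteristic `p`, `∏_{j ∈ 𝔽_p} (t - j) = t^p - t`, so each factor
`h - c` of `v` contributes `(h - c)^p - (h - c) = (h^p - h) - (c^p - c)`. -/

open Finset

theorem FiniteField.prod_univ_X_sub_C (K : Type*) [Field K] [Fintype K] :
    ∏ a : K, (X - C a) = X ^ Fintype.card K - X := by
  have hmonic : (X ^ Fintype.card K - X : K[X]).Monic :=
    monic_X_pow_sub (by rw [degree_X]; exact_mod_cast Fintype.one_lt_card)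
  have hcard : Multiset.card (X ^ Fintype.card K - X : K[X]).roots =
      (X ^ Fintype.card K - X : K[X]).natDegree := by
    rw [FiniteField.roots_X_pow_card_sub_X, FiniteField.X_pow_card_sub_X_natDegree_eq K
      Fintype.one_lt_card]
    rfl
  have hprod := prod_multiset_X_sub_C_of_monic_of_roots_card_eq hmonic hcard
  rwa [FiniteField.roots_X_pow_card_sub_X] at hprod

theorem prod_range_X_sub_C_natCast (R : Type*) [CommRing R] (p : ℕ) [Fact p.Prime]
    [CharP R p] : ∏ j ∈ range p, (X - C (j : R)) = X ^ p - X := by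
  have hZ : ∏ a : ZMod p, (X - C a) = X ^ p - X := by
    simpa [ZMod.card] using FiniteField.prod_univ_X_sub_C (ZMod p)
  have hmap := congrArg (Polynomial.map (ZMod.castHom (dvd_refl p) R)) hZ
  simp only [Polynomial.map_prod, Polynomial.map_sub, Polynomial.map_X, Polynomial.map_C,
    Polynomial.map_pow, ZMod.castHom_apply] at hmap
  rw [← hmap]
  exact prod_nbij' Nat.cast ZMod.val (by simp) (by simp [ZMod.val_lt])
    (fun j hj => ZMod.val_natCast_of_lt (mem_range.mp hj)) (by simp) (by simp)

theorem prod_range_X_sub_C_add_natCast {R : Type*} [CommRing R] (p : ℕ) [Fact p.Prime]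
    [CharP R p] (a : R) : ∏ j ∈ range p, (X - C (a + j)) = X ^ p - X - C (a ^ p - a) := by
  calc ∏ j ∈ range p, (X - C (a + j))
      = (∏ j ∈ range p, (X - C (j : R))).comp (X - C a) := by
        simp only [Polynomial.prod_comp, sub_comp, X_comp, C_comp, map_add]
        exact prod_congr rfl fun _ _ => by ring
    _ = X ^ p - X - C (a ^ p - a) := by
        rw [prod_range_X_sub_C_natCast, sub_comp, pow_comp, X_comp, sub_pow_char, map_sub,
          map_pow]
        ring

theorem SemiconjBy.aeval {R A : Type*} [CommSemiring R] [Semiring A] [Algebra R A] {a b y : A}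
    (hy : SemiconjBy y b a) (f : R[X]) : SemiconjBy y (aeval b f) (aeval a f) := by
  induction f using Polynomial.induction_on' with
  | add f g hf hg => simpa only [map_add] using hf.add_right hg
  | monomial n r =>
    simpa only [aeval_monomial] using
      SemiconjBy.mul_right (Algebra.commute_algebraMap_right r y) (hy.pow_right n)

namespace GWA

variable {k v}

theorem x_mul_y : x k v * y k v = aeval (h k v) v := by
  have hxy := RingQuot.mkAlgHom_rel k (GWARel.xy (v := v))
  rwa [map_mul, ← aeval_algHom_apply] at hxy

theorem semiconjBy_y : SemiconjBy (y k v) (h k v - 1) (h k v) := by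
  have hy := RingQuot.mkAlgHom_rel k (GWARel.hy (v := v))
  simp only [map_sub, map_mul, map_neg] at hy
  change h k v * y k v - y k v * h k v = -y k v at hy
  rw [SemiconjBy, mul_sub_one, ← neg_add_eq_sub, ← hy]
  abel

theorem semiconjBy_y_pow (m : ℕ) : SemiconjBy (y k v ^ m) (h k v - m) (h k v) := by
  induction m with
  | zero => simp
  | succ m ih =>
    have hstep : SemiconjBy (y k v) (h k v - (m + 1 : ℕ)) (h k v - m) := by
      simpa only [Nat.cast_succ, sub_sub, add_comm] using
        semiconjBy_y.sub_right (Nat.cast_commute m (y k v)).symm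
    rw [pow_succ]
    exact ih.mul_left hstep

theorem aeval_h_mul_y_pow (f : k[X]) (m : ℕ) :
    aeval (h k v) f * y k v ^ m = y k v ^ m * aeval (h k v) (f.comp (X - C (m : k))) := by
  rw [aeval_comp, map_sub, aeval_X, aeval_C, map_natCast]
  exact ((semiconjBy_y_pow m).aeval f).symm

theorem x_pow_mul_y_pow (m : ℕ) :
    x k v ^ m * y k v ^ m = aeval (h k v) (∏ j ∈ range m, v.comp (X - C (j : k))) := by
  induction m with
  | zero => simp
  | succ m ih =>
    calc x k v ^ (m + 1) * y k v ^ (m + 1)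
        = x k v ^ m * (x k v * y k v * y k v ^ m) := by
          rw [pow_succ, pow_succ']; simp only [mul_assoc]
      _ = _ := by
        rw [x_mul_y, aeval_h_mul_y_pow, ← mul_assoc, ih, ← map_mul, prod_range_succ]

end GWA

/-- If `char k = p > 0` and `v = ∏ (h - cᵢ)`, then in `A(v)` one has
`x^p * y^p = ∏ᵢ ((h^p - h) - (cᵢ^p - cᵢ))`. -/
theorem gwa_xp_mul_yp (p : ℕ) [hp : Fact p.Prime] [CharP k p]
    (n : ℕ) (c : Fin n → k)
    (hv : v = ∏ i, (Polynomial.X - Polynomial.C (c i))) :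
    GWA.x k v ^ p * GWA.y k v ^ p =
      (List.ofFn (fun i : Fin n => (GWA.h k v ^ p - GWA.h k v) -
        algebraMap k (GWA k v) (c i ^ p - c i))).prod := by
  have hprod : ∏ j ∈ range p, v.comp (X - C (j : k)) = ∏ i, (X ^ p - X - C (c i ^ p - c i)) := by
    simp only [hv, Polynomial.prod_comp, sub_comp, X_comp, C_comp]
    rw [prod_comm]
    refine prod_congr rfl fun i _ => ?_
    rw [← prod_range_X_sub_C_add_natCast]
    exact prod_congr rfl fun j _ => by rw [map_add]; ring
  rw [GWA.x_pow_mul_y_pow, hprod, ← List.prod_ofFn, map_list_prod, List.map_ofFn]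
  congr 2
  funext i
  simp
end

section
/- In the generalized Weyl algebra A(v) over a field k of characteristic 0, the inner derivation ad(x) (given by ad(x)(a) = xa − ax) is locally nilpotent: for every a ∈ A(v) there exists N ∈ ℕ with (ad x)^N(a) = 0. -/
open Polynomial

variable (k : Type*) [Field k] (v : Polynomial k)

/-! ### Auxiliary lemmas on iterates -/

section Aux

variable {A : Type*} [Ring A] (f : A → A)

lemma aux_iter_zero (h0 : f 0 = 0) (n : ℕ) : f^[n] 0 = 0 :=
  Function.iterate_fixed h0 n

lemma aux_mono (h0 : f 0 = 0) {a : A} {N M : ℕ} (h : f^[N] a = 0) (hNM : N ≤ M) :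
    f^[M] a = 0 := by
  obtain ⟨d, rfl⟩ := Nat.exists_eq_add_of_le hNM
  rw [add_comm, Function.iterate_add_apply, h]
  exact aux_iter_zero f h0 d

lemma aux_add (hadd : ∀ a b, f (a + b) = f a + f b) (N : ℕ) (a b : A) :
    f^[N] (a + b) = f^[N] a + f^[N] b := by
  induction N generalizing a b with
  | zero => rfl
  | succ n ih =>
    rw [Function.iterate_succ_apply, hadd, ih, ← Function.iterate_succ_apply,
      ← Function.iterate_succ_apply]

lemma aux_mul (hadd : ∀ a b, f (a + b) = f a + f b)
    (hmul : ∀ a b, f (a * b) = f a * b + a * f b) :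
    ∀ n N M (a b : A), N + M = n → f^[N] a = 0 → f^[M] b = 0 → f^[N + M] (a * b) = 0 := by
  have h0 : f 0 = 0 := by
    have := hmul 0 0
    simpa using this
  intro n
  induction n with
  | zero =>
    intro N M a b hn ha hb
    obtain ⟨rfl, rfl⟩ : N = 0 ∧ M = 0 := by omega
    simp only [Function.iterate_zero, id] at ha hb
    simp [ha, hb]
  | succ n ih =>
    intro N M a b hn ha hb
    match N, M with
    | 0, M =>
      simp only [Function.iterate_zero, id] at ha
      rw [ha, zero_mul, zero_add]
      exact aux_iter_zero f h0 M
    | N + 1, 0 =>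
      simp only [Function.iterate_zero, id] at hb
      rw [hb, mul_zero]
      exact aux_iter_zero f h0 _
    | N + 1, M + 1 =>
      have e1 : N + 1 + (M + 1) = (N + (M + 1)) + 1 := by omega
      rw [e1, Function.iterate_succ_apply, hmul,
        aux_add f hadd]
      have t1 : f^[N + (M + 1)] (f a * b) = 0 := by
        apply ih N (M + 1) (f a) b (by omega)
        · rw [← Function.iterate_succ_apply]; exact ha
        · exact hb
      have t2 : f^[N + (M + 1)] (a * f b) = 0 := by
        have e2 : N + (M + 1) = (N + 1) + M := by omega
        rw [e2]
        apply ih (N + 1) M a (f b) (by omega) ha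
        rw [← Function.iterate_succ_apply]; exact hb
      rw [t1, t2, add_zero]

end Aux

/-! ### The derivation `ad x` and the subalgebra on which it is locally nilpotent -/

/-- `ad x`. -/
noncomputable def GWA.adx : GWA k v → GWA k v :=
  fun b => GWA.x k v * b - b * GWA.x k v

lemma GWA.adx_add (a b : GWA k v) :
    GWA.adx k v (a + b) = GWA.adx k v a + GWA.adx k v b := by
  simp only [GWA.adx]; noncomm_ring

lemma GWA.adx_mul (a b : GWA k v) :
    GWA.adx k v (a * b) = GWA.adx k v a * b + a * GWA.adx k v b := by
  simp only [GWA.adx, sub_mul, mul_sub, mul_assoc]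
  abel

lemma GWA.adx_zero : GWA.adx k v 0 = 0 := by
  simp [GWA.adx]

lemma GWA.hx_rel : GWA.h k v * GWA.x k v - GWA.x k v * GWA.h k v = GWA.x k v := by
  have := RingQuot.mkAlgHom_rel k (GWARel.hx (k := k) (v := v))
  simpa only [map_sub, map_mul, GWA.h, GWA.x] using this

lemma GWA.xy_rel : GWA.x k v * GWA.y k v = Polynomial.aeval (GWA.h k v) v := by
  have := RingQuot.mkAlgHom_rel k (GWARel.xy (k := k) (v := v))
  rw [map_mul] at this
  rw [GWA.x, GWA.y, this, GWA.h, Polynomial.aeval_algHom_apply]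

lemma GWA.yx_rel : GWA.y k v * GWA.x k v = Polynomial.aeval (GWA.h k v - 1) v := by
  have := RingQuot.mkAlgHom_rel k (GWARel.yx (k := k) (v := v))
  rw [map_mul] at this
  rw [GWA.y, GWA.x, this, ← Polynomial.aeval_algHom_apply, map_sub, map_one, GWA.h]

/-- The set of locally `ad x`-nilpotent elements, as a subalgebra. -/
noncomputable def GWA.S : Subalgebra k (GWA k v) where
  carrier := {a | ∃ N : ℕ, (GWA.adx k v)^[N] a = 0}
  add_mem' := by
    rintro a b ⟨N, hN⟩ ⟨M, hM⟩
    refine ⟨max N M, ?_⟩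
    rw [aux_add _ (GWA.adx_add k v),
      aux_mono _ (GWA.adx_zero k v) hN (le_max_left N M),
      aux_mono _ (GWA.adx_zero k v) hM (le_max_right N M), add_zero]
  mul_mem' := by
    rintro a b ⟨N, hN⟩ ⟨M, hM⟩
    exact ⟨N + M, aux_mul _ (GWA.adx_add k v) (GWA.adx_mul k v) (N + M) N M a b rfl hN hM⟩
  algebraMap_mem' := by
    intro r
    refine ⟨1, ?_⟩
    simp only [Function.iterate_one, GWA.adx, Algebra.commutes, sub_self]

lemma GWA.x_mem : GWA.x k v ∈ GWA.S k v :=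
  ⟨1, by simp only [Function.iterate_one, GWA.adx, sub_self]⟩

lemma GWA.h_mem : GWA.h k v ∈ GWA.S k v := by
  refine ⟨2, ?_⟩
  have h1 : GWA.adx k v (GWA.h k v) = -GWA.x k v := by
    show GWA.x k v * GWA.h k v - GWA.h k v * GWA.x k v = -GWA.x k v
    simpa [neg_sub] using congrArg Neg.neg (GWA.hx_rel k v)
  have h2 : (GWA.adx k v)^[2] (GWA.h k v) = GWA.adx k v (GWA.adx k v (GWA.h k v)) := rfl
  have hx0 : GWA.adx k v (GWA.x k v) = 0 := sub_self _
  have hnx : GWA.adx k v (-GWA.x k v) = 0 := by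
    have h3 := GWA.adx_add k v (GWA.x k v) (-GWA.x k v)
    rw [add_neg_cancel, GWA.adx_zero, hx0, zero_add] at h3
    exact h3.symm
  rw [h2, h1, hnx]

lemma GWA.y_mem : GWA.y k v ∈ GWA.S k v := by
  have hS : Algebra.adjoin k {GWA.h k v} ≤ GWA.S k v :=
    Algebra.adjoin_le (Set.singleton_subset_iff.2 (GWA.h_mem k v))
  have h1 : Polynomial.aeval (GWA.h k v) v ∈ GWA.S k v :=
    hS (Polynomial.aeval_mem_adjoin_singleton k _)
  have h2 : Polynomial.aeval (GWA.h k v - 1) v ∈ GWA.S k v := by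
    have hsub : GWA.h k v - 1 ∈ GWA.S k v :=
      sub_mem (GWA.h_mem k v) (one_mem _)
    have hS' : Algebra.adjoin k {GWA.h k v - 1} ≤ GWA.S k v :=
      Algebra.adjoin_le (Set.singleton_subset_iff.2 hsub)
    exact hS' (Polynomial.aeval_mem_adjoin_singleton k _)
  have hy : GWA.adx k v (GWA.y k v) ∈ GWA.S k v := by
    have : GWA.adx k v (GWA.y k v) =
        Polynomial.aeval (GWA.h k v) v - Polynomial.aeval (GWA.h k v - 1) v := by
      rw [GWA.adx, GWA.xy_rel, GWA.yx_rel]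
    rw [this]
    exact sub_mem h1 h2
  obtain ⟨N, hN⟩ := hy
  exact ⟨N + 1, by rw [Function.iterate_succ_apply]; exact hN⟩

lemma GWA.top_mem (a : GWA k v) : a ∈ GWA.S k v := by
  obtain ⟨b, rfl⟩ := RingQuot.mkAlgHom_surjective k (GWARel k v) a
  induction b using FreeAlgebra.induction with
  | grade0 r =>
    rw [AlgHom.commutes]
    exact algebraMap_mem _ r
  | grade1 i =>
    fin_cases i
    · exact GWA.x_mem k v
    · exact GWA.y_mem k v
    · exact GWA.h_mem k v
  | mul a b ha hb =>
    rw [map_mul]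
    exact mul_mem ha hb
  | add a b ha hb =>
    rw [map_add]
    exact add_mem ha hb

/-- In characteristic `0`, `ad x : a ↦ x a - a x` is locally nilpotent on `A(v)`. -/
theorem gwa_ad_x_locally_nilpotent [CharZero k] (a : GWA k v) :
    ∃ N : ℕ, (fun b : GWA k v => GWA.x k v * b - b * GWA.x k v)^[N] a = 0 :=
  GWA.top_mem k v a
end
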